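/- Let R be a commutative ring, S a multiplicative subset. A u-S-short exact sequence 0 → A →f B →g C → 0 is u-S-split (there exist s ∈ S and f' : B → A with f' ∘ f = s·Id_A) if and only if there exist s' ∈ S and g' : C → B with g ∘ g' = s'·Id_C. -/

import Mathlib

universe u

def IsUSShortExact {R : Type u} [CommRing R] (S : Submonoid R)
    {A B C : Type u} [AddCommGroup A] [Module R A] [AddCommGroup B] [Module R B]
    [AddCommGroup C] [Module R C] (f : A →ₗ[R] B) (g : B →ₗ[R] C) : Prop :=
  (∃ s ∈ S, ∀ x ∈ LinearMap.ker f, s • x = 0) ∧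
  (∃ s ∈ S, (∀ x ∈ LinearMap.ker g, s • x ∈ LinearMap.range f) ∧
            (∀ x ∈ LinearMap.range f, s • x ∈ LinearMap.ker g)) ∧
  (∃ s ∈ S, ∀ y : C, s • y ∈ LinearMap.range g)

/-!
If `f'` is a retraction of `f` up to `s`, then `s • id - f ∘ f'` vanishes on the range of `f`, so
`s₁ • (s • id - f ∘ f')` vanishes on `ker g` and descends along `g`, which is surjective up to
`s₂`, to a section of `g` up to `s * s₁ * s₂`. Dually, if `g'` is a section of `g` up to `s'`, then
`s₁ • (s' • id - g' ∘ g)` lands in the range of `f` and lifts along `f`, which is injective up to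
`s₀`, to a retraction of `f` up to `s₀ * s' * s₁`.
-/

namespace LinearMap

variable {R : Type*} [CommRing R] {A B C M : Type*} [AddCommGroup A] [Module R A]
  [AddCommGroup B] [Module R B] [AddCommGroup C] [Module R C] [AddCommGroup M] [Module R M]

theorem exists_descend_of_smul_mem_range (g : B →ₗ[R] C) {s : R}
    (hs : ∀ c : C, s • c ∈ range g) (ψ : B →ₗ[R] M) (hψ : ker g ≤ ker ψ) :
    ∃ χ : C →ₗ[R] M, ∀ b c, g b = s • c → χ c = ψ b := by
  refine ⟨(ker g).liftQ ψ hψ ∘ₗ g.quotKerEquivRange.symm.toLinearMap ∘ₗ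
    codRestrict (range g) (s • LinearMap.id) hs, fun b c hbc => ?_⟩
  have : codRestrict (range g) (s • LinearMap.id) hs c = ⟨g b, mem_range_self g b⟩ :=
    Subtype.ext hbc.symm
  simp only [comp_apply, this, LinearEquiv.coe_coe, quotKerEquivRange_symm_apply_image]
  rfl

theorem exists_lift_of_smul_ker_eq_zero (f : A →ₗ[R] B) {s : R}
    (hs : ∀ a ∈ ker f, s • a = 0) (φ : M →ₗ[R] B) (hφ : ∀ m, φ m ∈ range f) :
    ∃ χ : M →ₗ[R] A, ∀ m a, f a = φ m → χ m = s • a := by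
  have hker : ker f ≤ ker (s • LinearMap.id : A →ₗ[R] A) := fun a ha => hs a ha
  refine ⟨(ker f).liftQ (s • LinearMap.id) hker ∘ₗ f.quotKerEquivRange.symm.toLinearMap ∘ₗ
    codRestrict (range f) φ hφ, fun m a ham => ?_⟩
  have : codRestrict (range f) φ hφ m = ⟨f a, mem_range_self f a⟩ := Subtype.ext ham.symm
  simp only [comp_apply, this, LinearEquiv.coe_coe, quotKerEquivRange_symm_apply_image]
  rfl

end LinearMap

theorem uS_split_iff_section
    {R : Type u} [CommRing R] (S : Submonoid R)
    {A B C : Type u} [AddCommGroup A] [Module R A] [AddCommGroup B] [Module R B]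
    [AddCommGroup C] [Module R C] (f : A →ₗ[R] B) (g : B →ₗ[R] C)
    (h : IsUSShortExact S f g) :
    (∃ s ∈ S, ∃ f' : B →ₗ[R] A, ∀ a : A, f' (f a) = s • a) ↔
    (∃ s' ∈ S, ∃ g' : C →ₗ[R] B, ∀ c : C, g (g' c) = s' • c) := by
  obtain ⟨⟨s₀, hs₀, hinj⟩, ⟨s₁, hs₁, hker, himg⟩, ⟨s₂, hs₂, hsurj⟩⟩ := h
  have hgf : ∀ a, s₁ • g (f a) = 0 := fun a => by
    simpa using himg (f a) (LinearMap.mem_range_self f a)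
  constructor
  · rintro ⟨s, hs, f', hf'⟩
    have hψ : LinearMap.ker g ≤ LinearMap.ker (s₁ • (s • LinearMap.id - f ∘ₗ f')) := by
      intro b hb
      obtain ⟨a, ha⟩ := hker b hb
      change s₁ • (s • b - f (f' b)) = 0
      rw [smul_sub, smul_comm, ← map_smul f, ← map_smul f', ← ha, hf', map_smul, sub_self]
    obtain ⟨χ, hχ⟩ := LinearMap.exists_descend_of_smul_mem_range g hsurj _ hψ
    refine ⟨s * s₁ * s₂, mul_mem (mul_mem hs hs₁) hs₂, χ, fun c => ?_⟩
    obtain ⟨b, hb⟩ := hsurj c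
    calc g (χ c) = s₁ • s • g b - s₁ • g (f (f' b)) := by
          rw [hχ b c hb]
          simp [smul_sub]
      _ = (s * s₁ * s₂) • c := by rw [hgf, sub_zero, hb, smul_comm s₁ s, mul_smul, mul_smul]
  · rintro ⟨s', hs', g', hg'⟩
    have hφ : ∀ b, s₁ • (s' • b - g' (g b)) ∈ LinearMap.range f := fun b =>
      hker _ (by rw [LinearMap.mem_ker, map_sub, map_smul, hg', sub_self])
    obtain ⟨χ, hχ⟩ :=
      LinearMap.exists_lift_of_smul_ker_eq_zero f hinj (s₁ • (s' • LinearMap.id - g' ∘ₗ g)) hφ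
    refine ⟨s₀ * s' * s₁, mul_mem (mul_mem hs₀ hs') hs₁, χ, fun a => ?_⟩
    have hfa : f ((s' * s₁) • a) = s₁ • (s' • f a - g' (g (f a))) := by
      rw [smul_sub, ← map_smul g', hgf, map_zero, sub_zero, mul_smul, map_smul, map_smul,
        smul_comm]
    rw [hχ (f a) _ hfa, smul_smul, mul_assoc]
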